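/- Let (a_n) be a nonincreasing interval-filling sequence. If (1+√3)·a_n ≤ r_n for all n, then both subsequences (a_{2n−1}) and (a_{2n}) are interval-filling; in particular a_n ≤ a_{n+2} + a_{n+4} + a_{n+6} + ⋯ for all n. -/

import Mathlib

/-!
Write `E = a (n+2) + a (n+4) + ⋯` and `O = a (n+3) + a (n+5) + ⋯`, so that the tail after `n + 1`
is `a (n+1) + E + O` and, `a` being nonincreasing, `O ≤ E`. If `a n > E`, the hypothesis at `n`
gives `(√3 - 1) a n < a (n+1)` and the hypothesis at `n + 1` gives `(1 + √3) a (n+1) < 2 a n`.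
Since `(1 + √3)(√3 - 1) = 2`, these two inequalities contradict each other.
-/

open Set MeasureTheory Pointwise

noncomputable def achievementSet (a : ℕ → ℝ) : Set ℝ :=
  {x | ∃ I : Set ℕ, HasSum (fun i : I => a i) x}

/-- `tail a (n + 1)` is the paper's `r_n`. -/
noncomputable def tail (a : ℕ → ℝ) (n : ℕ) : ℝ := ∑' i : ℕ, a (n + i)

def Fset (a : ℕ → ℝ) (k : ℕ) : Set ℝ :=
  {x | ∃ I : Finset ℕ, I ⊆ Finset.range k ∧ x = ∑ i ∈ I, a i}

noncomputable def iter (a : ℕ → ℝ) (k : ℕ) : Set ℝ :=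
  ⋃ f ∈ Fset a k, Set.Icc f (f + tail a k)

def IsCantorSet (C : Set ℝ) : Prop :=
  C.Nonempty ∧ IsCompact C ∧ Perfect C ∧ interior C = ∅

def IsCantorval (P : Set ℝ) : Prop :=
  P.Nonempty ∧ IsCompact P ∧ P = closure (interior P) ∧
  ∀ x ∈ P, (connectedComponentIn P x).Nontrivial →
    ∀ y ∈ ({sInf (connectedComponentIn P x), sSup (connectedComponentIn P x)} : Set ℝ),
      ∀ ε > 0, ∃ z ∈ P, z ≠ y ∧ |z - y| < ε ∧ connectedComponentIn P z = {z}

open Real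

/-- `altTail a n = a (n+2) + a (n+4) + ⋯` is the paper's `r_{n+1}^{(2)}`. -/
noncomputable def altTail (a : ℕ → ℝ) (n : ℕ) : ℝ := ∑' i : ℕ, a (n + 2 * (i + 1))

section
variable {a : ℕ → ℝ}

lemma Summable.comp_add_two_mul (hsum : Summable a) (n : ℕ) :
    Summable fun i : ℕ => a (n + 2 * i) :=
  hsum.comp_injective fun i j hij => by omega

lemma tail_eq_add_tail_succ (hsum : Summable a) (n : ℕ) : tail a n = a n + tail a (n + 1) := by
  have hsum' : Summable fun i : ℕ => a (n + i) := hsum.comp_injective (add_right_injective n)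
  rw [tail, hsum'.tsum_eq_zero_add, tail]
  simp only [add_zero, add_assoc, add_comm 1]

lemma tail_add_two_eq_altTail_add_altTail (hsum : Summable a) (n : ℕ) :
    tail a (n + 2) = altTail a n + altTail a (n + 1) := by
  rw [tail, ← tsum_even_add_odd (f := fun i : ℕ => a (n + 2 + i))
    ((hsum.comp_add_two_mul (n + 2)).congr fun _ => rfl)
    ((hsum.comp_add_two_mul (n + 3)).congr fun i => by ring_nf)]
  congr 1 <;> exact tsum_congr fun i => by ring_nf

lemma altTail_succ_le (hmono : Antitone a) (hsum : Summable a) (n : ℕ) :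
    altTail a (n + 1) ≤ altTail a n :=
  ((hsum.comp_add_two_mul (n + 3)).congr fun i => by ring_nf).tsum_le_tsum
    (fun _ => hmono (by omega)) ((hsum.comp_add_two_mul (n + 2)).congr fun i => by ring_nf)

lemma le_altTail_of_one_add_sqrt_three_mul_le_tail (hmono : Antitone a) (hsum : Summable a)
    {n : ℕ} (hn : (1 + √3) * a n ≤ tail a (n + 1))
    (hn₁ : (1 + √3) * a (n + 1) ≤ tail a (n + 2)) : a n ≤ altTail a n := by
  by_contra! hlt
  have hsplit := tail_add_two_eq_altTail_add_altTail hsum n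
  have hodd := altTail_succ_le hmono hsum n
  rw [tail_eq_add_tail_succ hsum, hsplit] at hn
  rw [hsplit] at hn₁
  have hlow : (√3 - 1) * a n < a (n + 1) := by linarith
  have hup : (1 + √3) * a (n + 1) < 2 * a n := by linarith
  have hsq : (1 + √3) * (√3 - 1) = 2 := by
    nlinarith [Real.sq_sqrt (show (0 : ℝ) ≤ 3 by norm_num)]
  have : 2 * a n < 2 * a n :=
    calc 2 * a n = (1 + √3) * ((√3 - 1) * a n) := by rw [← mul_assoc, hsq]
      _ < (1 + √3) * a (n + 1) := by gcongr
      _ < 2 * a n := hup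
  exact lt_irrefl _ this

end

theorem stmt_19_general (a : ℕ → ℝ) (hmono : Antitone a)
    (hsum : Summable a)
    (h : ∀ n, (1 + Real.sqrt 3) * a n ≤ tail a (n + 1)) :
    ∀ n, a n ≤ ∑' i : ℕ, a (n + 2 * (i + 1)) :=
  fun n => le_altTail_of_one_add_sqrt_three_mul_le_tail hmono hsum (h n) (h (n + 1))

/-- If (a_n) is nonincreasing, interval-filling and (1+√3)·a_n ≤ r_n
for all n, then both the odd- and even-indexed subsequences are interval-filling:
a_n ≤ a_{n+2} + a_{n+4} + ⋯ for all n. -/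
theorem stmt_19 (a : ℕ → ℝ) (hpos : ∀ n, 0 < a n) (hmono : Antitone a)
    (hsum : Summable a) (hIF : ∀ n, a n ≤ tail a (n + 1))
    (h : ∀ n, (1 + Real.sqrt 3) * a n ≤ tail a (n + 1)) :
    ∀ n, a n ≤ ∑' i : ℕ, a (n + 2 * (i + 1)) :=
  stmt_19_general a hmono hsum h
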